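/- For any zero-synergy distribution Q⁰ = P_{YX} × e_{Z|X} (Markov chain Y−X−Z) of finite random variables, the unique-information distortion term satisfies UI_{Q⁰}(Y;X∖Z) = I_{Q⁰}(Y;X) − I_{Q⁰}(Y;Z) = I_P(Y;X) − I_{Q⁰}(Y;Z); consequently minimizing UI_{Q⁰}(Y;X∖Z) + β I_{Q⁰}(Z;X) over encoders e is equivalent to maximizing I_{Q⁰}(Y;Z) − β I_{Q⁰}(Z;X) (the classical information bottleneck). -/

import Mathlib

open scoped BigOperators
open Real

noncomputable section

variable {W X Y Z : Type*}

/-- A channel (row-stochastic conditional distribution) from `X` to `Y`. -/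
def IsChannel [Fintype Y] (k : X → Y → ℝ) : Prop :=
  (∀ x y, 0 ≤ k x y) ∧ ∀ x, ∑ y, k x y = 1

/-- A probability distribution on a finite set. -/
def IsDist [Fintype X] (p : X → ℝ) : Prop :=
  (∀ x, 0 ≤ p x) ∧ ∑ x, p x = 1

/-- Composition of a decoder `d : Z → Y` with an encoder `e : X → Z`:
`(d ∘ e)(y|x) = ∑ z d(y|z) e(z|x)`. -/
def chComp [Fintype Z] (d : Z → Y → ℝ) (e : X → Z → ℝ) : X → Y → ℝ :=
  fun x y => ∑ z, d z y * e x z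

/-- Conditional KL divergence `D(k ‖ l | pi) = ∑_x pi x ∑_y k(y|x) log (k(y|x)/l(y|x))`. -/
def condKL [Fintype X] [Fintype Y] (pi : X → ℝ) (k l : X → Y → ℝ) : ℝ :=
  ∑ x, pi x * ∑ y, k x y * Real.log (k x y / l x y)

/-- Deficiency of a decoder `d` w.r.t. a channel `k`, weighted by `pi`:
the infimum over encoders `e` of `D(k ‖ d∘e | pi)`. -/
def deficiency [Fintype X] [Fintype Y] [Fintype Z]
    (pi : X → ℝ) (d : Z → Y → ℝ) (k : X → Y → ℝ) : ℝ :=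
  sInf {r : ℝ | ∃ e : X → Z → ℝ, IsChannel e ∧ r = condKL pi k (chComp d e)}

/-- A joint probability mass function for a triple `(Y, X, Z)`. -/
def IsPMF3 [Fintype X] [Fintype Y] [Fintype Z] (p : Y → X → Z → ℝ) : Prop :=
  (∀ y x z, 0 ≤ p y x z) ∧ ∑ y, ∑ x, ∑ z, p y x z = 1

def mYX [Fintype Z] (p : Y → X → Z → ℝ) : Y → X → ℝ := fun y x => ∑ z, p y x z
def mYZ [Fintype X] (p : Y → X → Z → ℝ) : Y → Z → ℝ := fun y z => ∑ x, p y x z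
def mXZ [Fintype Y] (p : Y → X → Z → ℝ) : X → Z → ℝ := fun x z => ∑ y, p y x z
def mX  [Fintype Y] [Fintype Z] (p : Y → X → Z → ℝ) : X → ℝ := fun x => ∑ y, ∑ z, p y x z
def mY  [Fintype X] [Fintype Z] (p : Y → X → Z → ℝ) : Y → ℝ := fun y => ∑ x, ∑ z, p y x z
def mZ  [Fintype X] [Fintype Y] (p : Y → X → Z → ℝ) : Z → ℝ := fun z => ∑ y, ∑ x, p y x z

/-- Mutual information of a bivariate joint distribution (in nats). -/
def MI2 [Fintype X] [Fintype Y] (q : X → Y → ℝ) : ℝ :=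
  ∑ x, ∑ y, q x y * Real.log (q x y / ((∑ y', q x y') * (∑ x', q x' y)))

/-- `I(Y; (X,Z))` for a joint triple distribution (in nats). -/
def MI_Y_XZ [Fintype X] [Fintype Y] [Fintype Z] (p : Y → X → Z → ℝ) : ℝ :=
  ∑ y, ∑ x, ∑ z, p y x z * Real.log (p y x z / (mY p y * mXZ p x z))

/-- Conditional mutual information `I(Y;X|Z)` (in nats). -/
def CMI_YX_gZ [Fintype X] [Fintype Y] [Fintype Z] (p : Y → X → Z → ℝ) : ℝ :=
  ∑ y, ∑ x, ∑ z, p y x z * Real.log ((p y x z * mZ p z) / (mYZ p y z * mXZ p x z))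

/-- Conditional mutual information `I(Y;Z|X)` (in nats). -/
def CMI_YZ_gX [Fintype X] [Fintype Y] [Fintype Z] (p : Y → X → Z → ℝ) : ℝ :=
  ∑ y, ∑ x, ∑ z, p y x z * Real.log ((p y x z * mX p x) / (mYX p y x * mXZ p x z))

/-- The set `Δ_P` of joint distributions matching `p` on the `(Y,X)`- and `(Y,Z)`-marginals. -/
def deltaP [Fintype X] [Fintype Y] [Fintype Z] (p : Y → X → Z → ℝ) : Set (Y → X → Z → ℝ) :=
  {q | IsPMF3 q ∧ mYX q = mYX p ∧ mYZ q = mYZ p}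

/-- Unique information `UI(Y; X ∖ Z) = inf_{Q ∈ Δ_P} I_Q(Y;X|Z)`. -/
def UIX [Fintype X] [Fintype Y] [Fintype Z] (p : Y → X → Z → ℝ) : ℝ :=
  sInf {r : ℝ | ∃ q ∈ deltaP p, r = CMI_YX_gZ q}

/-- Unique information `UI(Y; Z ∖ X) = inf_{Q ∈ Δ_P} I_Q(Y;Z|X)`. -/
def UIZ [Fintype X] [Fintype Y] [Fintype Z] (p : Y → X → Z → ℝ) : ℝ :=
  sInf {r : ℝ | ∃ q ∈ deltaP p, r = CMI_YZ_gX q}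

/-- Shannon entropy (in nats). -/
def entropy [Fintype X] (p : X → ℝ) : ℝ := ∑ x, -(p x * Real.log (p x))

end

/-! By the chain rule, every joint distribution satisfies
`I(Y;X|Z) = I(Y;X) + I(Y;Z|X) − I(Y;Z)`. On `Δ_P` the first and last terms are fixed by the
`(Y,X)`- and `(Y,Z)`-marginals, while `I(Y;Z|X) ≥ 0` vanishes at the Markov distribution
`Q⁰ = P_{YX} × e_{Z|X}`, which is therefore a minimizer. Since `I_{Q⁰}(Y;X) = I_P(Y;X)` does
not depend on `e`, the two objectives differ by a constant. -/

open Finset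

lemma sub_le_mul_log_div {a b : ℝ} (ha : 0 ≤ a) (hb : 0 < b) : a - b ≤ a * log (a / b) := by
  have hkl : a * log (a / b) - (a - b) = b * InformationTheory.klFun (a / b) := by
    rw [InformationTheory.klFun_apply]
    field_simp
    ring
  linarith [mul_nonneg hb.le (InformationTheory.klFun_nonneg (div_nonneg ha hb.le))]

section Marginals

variable {X Y Z : Type*} {q : Y → X → Z → ℝ}

lemma le_mYX [Fintype Z] (hq : ∀ y x z, 0 ≤ q y x z)
    (y : Y) (x : X) (z : Z) : q y x z ≤ mYX q y x :=
  single_le_sum (fun z _ => hq y x z) (mem_univ z)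

lemma le_mYZ [Fintype X] (hq : ∀ y x z, 0 ≤ q y x z)
    (y : Y) (x : X) (z : Z) : q y x z ≤ mYZ q y z :=
  single_le_sum (fun x _ => hq y x z) (mem_univ x)

lemma le_mXZ [Fintype Y] (hq : ∀ y x z, 0 ≤ q y x z)
    (y : Y) (x : X) (z : Z) : q y x z ≤ mXZ q x z :=
  single_le_sum (fun y _ => hq y x z) (mem_univ y)

lemma le_mX [Fintype Y] [Fintype Z] (hq : ∀ y x z, 0 ≤ q y x z)
    (y : Y) (x : X) (z : Z) : q y x z ≤ mX q x :=
  (le_mYX hq y x z).trans <|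
    single_le_sum (f := fun y => mYX q y x) (fun y _ => sum_nonneg fun z _ => hq y x z) (mem_univ y)

lemma le_mY [Fintype X] [Fintype Z] (hq : ∀ y x z, 0 ≤ q y x z)
    (y : Y) (x : X) (z : Z) : q y x z ≤ mY q y :=
  (le_mYX hq y x z).trans <|
    single_le_sum (f := fun x => mYX q y x) (fun x _ => sum_nonneg fun z _ => hq y x z) (mem_univ x)

lemma le_mZ [Fintype X] [Fintype Y] (hq : ∀ y x z, 0 ≤ q y x z)
    (y : Y) (x : X) (z : Z) : q y x z ≤ mZ q z :=
  (le_mYZ hq y x z).trans <|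
    single_le_sum (f := fun y => mYZ q y z) (fun y _ => sum_nonneg fun x _ => hq y x z) (mem_univ y)

end Marginals

section ChainRule

variable {X Y Z : Type*} [Fintype X] [Fintype Y] [Fintype Z]

lemma MI2_mYX_eq_sum (q : Y → X → Z → ℝ) :
    MI2 (mYX q) = ∑ y, ∑ x, ∑ z, q y x z * log (mYX q y x / (mY q y * mX q x)) := by
  unfold MI2
  refine sum_congr rfl fun y _ => sum_congr rfl fun x _ => ?_
  exact sum_mul ..

lemma MI2_mYZ_eq_sum (q : Y → X → Z → ℝ) :
    MI2 (mYZ q) = ∑ y, ∑ x, ∑ z, q y x z * log (mYZ q y z / (mY q y * mZ q z)) := by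
  have hmY : ∀ y, ∑ z, mYZ q y z = mY q y := fun y => sum_comm
  simp only [MI2, hmY]
  refine sum_congr rfl fun y _ => ?_
  rw [sum_comm]
  exact sum_congr rfl fun z _ => sum_mul ..

variable {q : Y → X → Z → ℝ}

lemma CMI_YX_gZ_eq_MI_Y_XZ_sub (hq : ∀ y x z, 0 ≤ q y x z) :
    CMI_YX_gZ q = MI_Y_XZ q - MI2 (mYZ q) := by
  simp only [CMI_YX_gZ, MI_Y_XZ, MI2_mYZ_eq_sum, ← sum_sub_distrib]
  refine sum_congr rfl fun y _ => sum_congr rfl fun x _ => sum_congr rfl fun z _ => ?_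
  rcases (hq y x z).eq_or_lt with h | h
  · simp [← h]
  have := h.trans_le (le_mYZ hq y x z)
  have := h.trans_le (le_mXZ hq y x z)
  have := h.trans_le (le_mY hq y x z)
  have := h.trans_le (le_mZ hq y x z)
  rw [← mul_sub, ← log_div (by positivity) (by positivity)]
  congr 2
  field_simp

lemma MI_Y_XZ_eq_MI2_mYX_add (hq : ∀ y x z, 0 ≤ q y x z) :
    MI_Y_XZ q = MI2 (mYX q) + CMI_YZ_gX q := by
  simp only [CMI_YZ_gX, MI_Y_XZ, MI2_mYX_eq_sum, ← sum_add_distrib]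
  refine sum_congr rfl fun y _ => sum_congr rfl fun x _ => sum_congr rfl fun z _ => ?_
  rcases (hq y x z).eq_or_lt with h | h
  · simp [← h]
  have := h.trans_le (le_mYX hq y x z)
  have := h.trans_le (le_mXZ hq y x z)
  have := h.trans_le (le_mY hq y x z)
  have := h.trans_le (le_mX hq y x z)
  rw [← mul_add, ← log_mul (by positivity) (by positivity)]
  congr 2
  field_simp

lemma CMI_YX_gZ_eq (hq : ∀ y x z, 0 ≤ q y x z) :
    CMI_YX_gZ q = MI2 (mYX q) + CMI_YZ_gX q - MI2 (mYZ q) := by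
  rw [CMI_YX_gZ_eq_MI_Y_XZ_sub hq, MI_Y_XZ_eq_MI2_mYX_add hq]

end ChainRule

section UniqueInformation

variable {X Y Z : Type*} [Fintype X] [Fintype Y] [Fintype Z] {q : Y → X → Z → ℝ}

/-- Gibbs' inequality against the Markov reference `mYX q y x * mXZ q x z / mX q x`, whose total
mass is that of `q`. -/
lemma CMI_YZ_gX_nonneg (hq : ∀ y x z, 0 ≤ q y x z) : 0 ≤ CMI_YZ_gX q := by
  set r : Y → X → Z → ℝ := fun y x z => mYX q y x * mXZ q x z / mX q x
  have hmass : ∑ y, ∑ x, ∑ z, r y x z = ∑ y, ∑ x, ∑ z, q y x z := by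
    have hmX : ∀ x, ∑ z, mXZ q x z = mX q x := fun x => sum_comm
    rw [sum_comm, sum_comm (f := fun y x => ∑ z, q y x z)]
    refine sum_congr rfl fun x _ => ?_
    simp only [r, ← sum_div, ← mul_sum, ← sum_mul, hmX]
    exact mul_self_div_self _
  have hterm : ∀ y x z, q y x z - r y x z ≤
      q y x z * log (q y x z * mX q x / (mYX q y x * mXZ q x z)) := by
    intro y x z
    rcases (hq y x z).eq_or_lt with h | h
    · simp only [← h, zero_sub, zero_mul, neg_nonpos, r]
      exact div_nonneg (mul_nonneg (sum_nonneg fun z _ => hq y x z)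
        (sum_nonneg fun y _ => hq y x z)) ((hq y x z).trans (le_mX hq y x z))
    have := h.trans_le (le_mYX hq y x z)
    have := h.trans_le (le_mXZ hq y x z)
    have := h.trans_le (le_mX hq y x z)
    rw [← div_div_eq_mul_div]
    exact sub_le_mul_log_div h.le (by positivity)
  calc (0 : ℝ) = ∑ y, ∑ x, ∑ z, (q y x z - r y x z) := by
        simp only [sum_sub_distrib, hmass, sub_self]
    _ ≤ CMI_YZ_gX q :=
        sum_le_sum fun y _ => sum_le_sum fun x _ => sum_le_sum fun z _ => hterm y x z

lemma UIX_eq_of_CMI_YZ_gX_eq_zero (hq : IsPMF3 q) (h : CMI_YZ_gX q = 0) :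
    UIX q = MI2 (mYX q) - MI2 (mYZ q) := by
  refine IsLeast.csInf_eq ⟨⟨q, ⟨hq, rfl, rfl⟩, ?_⟩, ?_⟩
  · rw [CMI_YX_gZ_eq hq.1, h, add_zero]
  · rintro _ ⟨q', ⟨hq', hYX, hYZ⟩, rfl⟩
    rw [CMI_YX_gZ_eq hq'.1, hYX, hYZ]
    linarith [CMI_YZ_gX_nonneg hq'.1]

end UniqueInformation

section Markov

variable {X Y Z : Type*} {p : Y → X → ℝ} {e : X → Z → ℝ}

lemma mYX_markov [Fintype Z] (he : ∀ x, ∑ z, e x z = 1) :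
    mYX (fun y x z => p y x * e x z) = p := by
  ext y x
  simp [mYX, ← mul_sum, he x]

lemma isPMF3_markov [Fintype X] [Fintype Y] [Fintype Z] (hp₀ : ∀ y x, 0 ≤ p y x)
    (hp₁ : ∑ y, ∑ x, p y x = 1) (he : IsChannel e) : IsPMF3 (fun y x z => p y x * e x z) := by
  refine ⟨fun y x z => mul_nonneg (hp₀ y x) (he.1 x z), ?_⟩
  simpa [← mul_sum, he.2] using hp₁

lemma CMI_YZ_gX_markov [Fintype X] [Fintype Y] [Fintype Z] (he : ∀ x, ∑ z, e x z = 1) :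
    CMI_YZ_gX (fun y x z => p y x * e x z) = 0 := by
  refine sum_eq_zero fun y _ => sum_eq_zero fun x _ => sum_eq_zero fun z _ => ?_
  have hmX : mX (fun y x z => p y x * e x z) x = ∑ y, p y x := by
    simp [mX, ← mul_sum, he x]
  have hmXZ : mXZ (fun y x z => p y x * e x z) x z = (∑ y, p y x) * e x z := by
    simp [mXZ, sum_mul]
  have hden : p y x * ((∑ y, p y x) * e x z) = p y x * e x z * ∑ y, p y x := by ring
  rw [mYX_markov he, hmX, hmXZ, hden]
  rcases eq_or_ne (p y x * e x z * ∑ y, p y x) 0 with h | h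
  · simp [h]
  · simp [div_self h]

end Markov

/-- for zero-synergy distributions `Qⁱ = P_{YX} × eⁱ_{Z|X}`,
`UI_{Q}(Y;X∖Z) = I_Q(Y;X) − I_Q(Y;Z) = I_P(Y;X) − I_Q(Y;Z)`; hence minimizing
`UI_Q(Y;X∖Z) + β I_Q(Z;X)` over encoders is equivalent to maximizing
`I_Q(Y;Z) − β I_Q(Z;X)` (the classical information bottleneck). -/
theorem UIB_equiv_classical_IB
    {X Y Z : Type*} [Fintype X] [Fintype Y] [Fintype Z]
    (pYX : Y → X → ℝ) (hp : (∀ y x, 0 ≤ pYX y x) ∧ ∑ y, ∑ x, pYX y x = 1)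
    (e1 e2 : X → Z → ℝ) (he1 : IsChannel e1) (he2 : IsChannel e2) (beta : ℝ) :
    UIX (fun y x z => pYX y x * e1 x z) =
      MI2 (mYX (fun y x z => pYX y x * e1 x z)) -
        MI2 (mYZ (fun y x z => pYX y x * e1 x z)) ∧
    MI2 (mYX (fun y x z => pYX y x * e1 x z)) = MI2 pYX ∧
    (UIX (fun y x z => pYX y x * e1 x z) +
        beta * MI2 (mXZ (fun y x z => pYX y x * e1 x z)) ≤
      UIX (fun y x z => pYX y x * e2 x z) +
        beta * MI2 (mXZ (fun y x z => pYX y x * e2 x z)) ↔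
      MI2 (mYZ (fun y x z => pYX y x * e2 x z)) -
          beta * MI2 (mXZ (fun y x z => pYX y x * e2 x z)) ≤
        MI2 (mYZ (fun y x z => pYX y x * e1 x z)) -
          beta * MI2 (mXZ (fun y x z => pYX y x * e1 x z))) := by
  have hUIX : ∀ e : X → Z → ℝ, IsChannel e → UIX (fun y x z => pYX y x * e x z) =
      MI2 (mYX (fun y x z => pYX y x * e x z)) - MI2 (mYZ (fun y x z => pYX y x * e x z)) :=
    fun e he => UIX_eq_of_CMI_YZ_gX_eq_zero (isPMF3_markov hp.1 hp.2 he) (CMI_YZ_gX_markov he.2)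
  refine ⟨hUIX e1 he1, by rw [mYX_markov he1.2], ?_⟩
  rw [hUIX e1 he1, hUIX e2 he2, mYX_markov he1.2, mYX_markov he2.2]
  constructor <;> intro h <;> linarith
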